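/- arXiv:2109.09187 — 7 statements merged into one kernel-verified Lean document; each statement's English description precedes it below -/
import Mathlib

section
/- Let p be a positive even integer such that p/2 is not a perfect square. Then there exists an integer r, relatively prime to 2p, such that for every prime s with s ≡ r (mod 2p), neither p/2 nor -p/2 is a quadratic residue modulo s. -/
/-!
Let `n = p / 2`. As `n` is not a square, some prime `ℓ` divides `n` to an odd power `v`; write
`n = ℓ ^ v * m` with `ℓ ∤ m`. By the Chinese remainder theorem there is `b ≡ 1 [MOD 4 * m]` with
`J(ℓ | b) = -1` (take `b ≡ 5 [MOD 8]` if `ℓ = 2`, and `b` a nonresidue mod `ℓ` otherwise, using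
reciprocity), so `J(n | b) = J(ℓ | b) ^ v * J(m | b) = -1`. On odd numbers `J(n | ·)` has period
`4 * n = 2 * p`, and `b ≡ 1 [MOD 4]` gives `J(-n | s) = J(n | s)` for `s ≡ b`. Hence `r = b` works:
for every `s ≡ r [MOD 2 * p]` both `±n` have Jacobi symbol `-1` modulo `s`, so neither is a square.
-/

open NumberTheorySymbols

theorem Nat.exists_prime_odd_factorization_of_not_isSquare {n : ℕ} (hn : n ≠ 0)
    (hns : ¬IsSquare n) : ∃ ℓ, ℓ.Prime ∧ Odd (n.factorization ℓ) := by
  by_contra! heven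
  refine hns ⟨n.factorization.prod fun p e => p ^ (e / 2), ?_⟩
  conv_lhs => rw [← Nat.prod_factorization_pow_eq_self hn]
  rw [Finsupp.prod, Finsupp.prod, ← Finset.prod_mul_distrib]
  refine Finset.prod_congr rfl fun p hp => ?_
  obtain ⟨k, hk⟩ := Nat.not_odd_iff_even.mp (heven p (Nat.prime_of_mem_primeFactors hp))
  rw [← pow_add, hk]
  congr 1
  omega

theorem jacobiSym_natCast_eq_one_of_modEq_one {m b : ℕ} (hb : b ≡ 1 [MOD 4 * m]) :
    J(m | b) = 1 := by
  have hb_odd : Odd b := Nat.odd_iff.mpr ((hb.of_mul_right m).of_dvd (by norm_num : 2 ∣ 4))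
  rw [jacobiSym.mod_right _ hb_odd, Int.natAbs_natCast, hb, Nat.one_mod_eq_one.mpr (by omega),
    jacobiSym.one_right]

theorem jacobiSym_congr_right {a : ℤ} {b c : ℕ} (hb : Odd b) (hc : Odd c)
    (h : b ≡ c [MOD 4 * a.natAbs]) : J(a | b) = J(a | c) := by
  rw [jacobiSym.mod_right a hb, jacobiSym.mod_right a hc, h]

theorem not_exists_sq_modEq_of_jacobiSym_eq_neg_one {a : ℤ} {b : ℕ} (h : J(a | b) = -1) :
    ¬∃ x : ℤ, x ^ 2 ≡ a [ZMOD b] := by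
  rintro ⟨x, hx⟩
  refine ZMod.nonsquare_of_jacobiSym_eq_neg_one h ⟨x, ?_⟩
  rw [← sq, ← (ZMod.intCast_eq_intCast_iff _ _ _).mpr hx]
  push_cast
  ring

theorem exists_modEq_one_jacobiSym_two_eq_neg_one {m : ℕ} (hm : Odd m) :
    ∃ b, b ≡ 1 [MOD 4 * m] ∧ J(2 | b) = -1 := by
  have hco : Nat.Coprime 8 m := by
    simpa using (Nat.coprime_two_left.mpr hm).pow_left 3
  obtain ⟨b, hb8, hbm⟩ := Nat.chineseRemainder hco 5 1
  have hb8' : b % 8 = 5 := hb8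
  refine ⟨b, ?_, ?_⟩
  · refine (Nat.modEq_and_modEq_iff_modEq_mul ?_).mp ⟨?_, hbm⟩
    · exact Nat.Coprime.pow_left 2 (Nat.coprime_two_left.mpr hm)
    · exact (hb8.of_dvd (by norm_num : 4 ∣ 8)).trans (by decide : 5 ≡ 1 [MOD 4])
  · rw [jacobiSym.at_two (Nat.odd_iff.mpr (by omega)), ZMod.χ₈_nat_mod_eight, hb8']
    decide

theorem exists_modEq_one_jacobiSym_odd_prime_eq_neg_one {ℓ m : ℕ} [Fact ℓ.Prime] (hℓ : ℓ ≠ 2)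
    (hℓm : ¬ℓ ∣ m) : ∃ b, b ≡ 1 [MOD 4 * m] ∧ J(ℓ | b) = -1 := by
  have hℓ_prime : ℓ.Prime := Fact.out
  obtain ⟨a, ha⟩ := FiniteField.exists_nonsquare (F := ZMod ℓ)
    (by rw [ZMod.ringChar_zmod_n]; exact hℓ)
  have hco : Nat.Coprime (4 * m) ℓ := by
    refine (hℓ_prime.coprime_iff_not_dvd.mpr fun hdvd => ?_).symm
    rcases hℓ_prime.dvd_mul.mp hdvd with h4 | hm
    · exact hℓ ((Nat.prime_dvd_prime_iff_eq hℓ_prime Nat.prime_two).mp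
        (hℓ_prime.dvd_of_dvd_pow (show ℓ ∣ 2 ^ 2 by simpa using h4)))
    · exact hℓm hm
  obtain ⟨b, hb1, hba⟩ := Nat.chineseRemainder hco 1 a.val
  have hb4 : b % 4 = 1 := hb1.of_mul_right m
  refine ⟨b, hb1, ?_⟩
  rw [jacobiSym.quadratic_reciprocity_one_mod_four' (hℓ_prime.odd_of_ne_two hℓ) hb4]
  refine ZMod.nonsquare_iff_jacobiSym_eq_neg_one.mpr ?_
  rwa [Int.cast_natCast, (ZMod.natCast_eq_natCast_iff _ _ _).mpr hba, ZMod.natCast_zmod_val]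

theorem exists_modEq_one_jacobiSym_prime_eq_neg_one {ℓ m : ℕ} (hℓ : ℓ.Prime) (hℓm : ¬ℓ ∣ m) :
    ∃ b, b ≡ 1 [MOD 4 * m] ∧ J(ℓ | b) = -1 := by
  rcases eq_or_ne ℓ 2 with rfl | hℓ2
  · exact exists_modEq_one_jacobiSym_two_eq_neg_one (Nat.odd_iff.mpr (by omega))
  · have := Fact.mk hℓ
    exact exists_modEq_one_jacobiSym_odd_prime_eq_neg_one hℓ2 hℓm

theorem exists_modEq_one_jacobiSym_eq_neg_one_of_not_isSquare {n : ℕ} (hn : n ≠ 0)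
    (hns : ¬IsSquare n) : ∃ b, b ≡ 1 [MOD 4] ∧ J(n | b) = -1 := by
  obtain ⟨ℓ, hℓ, hv⟩ := Nat.exists_prime_odd_factorization_of_not_isSquare hn hns
  obtain ⟨b, hbm, hbℓ⟩ :=
    exists_modEq_one_jacobiSym_prime_eq_neg_one hℓ (Nat.not_dvd_ordCompl hℓ hn)
  refine ⟨b, hbm.of_mul_right _, ?_⟩
  have hn_eq : (n : ℤ) = (ℓ : ℤ) ^ n.factorization ℓ * (ordCompl[ℓ] n : ℕ) := by
    exact_mod_cast (Nat.ordProj_mul_ordCompl_eq_self n ℓ).symm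
  rw [hn_eq, jacobiSym.mul_left, jacobiSym.pow_left, hbℓ, hv.neg_one_pow,
    jacobiSym_natCast_eq_one_of_modEq_one hbm, mul_one]

theorem exists_forall_modEq_jacobiSym_eq_neg_one {n : ℕ} (hn : n ≠ 0) (hns : ¬IsSquare n) :
    ∃ r, Nat.Coprime r (4 * n) ∧ ∀ s, s ≡ r [MOD 4 * n] → J(n | s) = -1 ∧ J(-n | s) = -1 := by
  obtain ⟨r, hr4, hrJ⟩ := exists_modEq_one_jacobiSym_eq_neg_one_of_not_isSquare hn hns
  have hr_odd : Odd r := Nat.odd_iff.mpr (hr4.of_dvd (by norm_num : 2 ∣ 4))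
  refine ⟨r, ?_, fun s hs => ?_⟩
  · refine Nat.Coprime.mul_right ?_ ?_
    · simpa using (Nat.coprime_two_right.mpr hr_odd).pow_right 2
    · have hgcd : Int.gcd n r = 1 := by
        by_contra hgcd
        have := jacobiSym.eq_zero_iff.mpr ⟨hr_odd.pos.ne', hgcd⟩
        norm_num [hrJ] at this
      rw [Int.gcd_natCast_natCast] at hgcd
      exact Nat.Coprime.symm hgcd
  · have hs4 : s % 4 = 1 := (hs.of_mul_right n).trans hr4
    have hs_odd : Odd s := Nat.odd_iff.mpr (by omega)
    have hsJ : J(n | s) = -1 := by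
      rw [jacobiSym_congr_right hs_odd hr_odd (by simpa using hs), hrJ]
    refine ⟨hsJ, ?_⟩
    rw [jacobiSym.neg _ hs_odd, ZMod.χ₄_nat_one_mod_four hs4, hsJ, one_mul]

/-- If `p` is a positive even integer such that `p/2` is not a perfect
square, then there exists an integer `r`, relatively prime to `2p`, such that for
every prime `s` with `s ≡ r (mod 2p)`, neither `p/2` nor `-p/2` is a quadratic
residue modulo `s`. -/
theorem stmt0 (p : ℤ) (hp : 0 < p) (hpe : 2 ∣ p)
    (hns : ¬ ∃ m : ℤ, m ^ 2 = p / 2) :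
    ∃ r : ℤ, IsCoprime r (2 * p) ∧
      ∀ s : ℕ, s.Prime → (s : ℤ) ≡ r [ZMOD 2 * p] →
        (¬ ∃ x : ℤ, x ^ 2 ≡ p / 2 [ZMOD (s : ℤ)]) ∧
        (¬ ∃ x : ℤ, x ^ 2 ≡ -(p / 2) [ZMOD (s : ℤ)]) := by
  obtain ⟨k, rfl⟩ := hpe
  lift k to ℕ using by omega
  have hk : (2 * (k : ℤ)) / 2 = k := by omega
  have h2p : 2 * (2 * (k : ℤ)) = ((4 * k : ℕ) : ℤ) := by push_cast; ring
  rw [hk] at hns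
  rw [hk, h2p]
  have hk_nonsq : ¬IsSquare k := by
    rintro ⟨m, hm⟩
    exact hns ⟨m, by rw [hm]; push_cast; ring⟩
  obtain ⟨r, hr_cop, hr⟩ := exists_forall_modEq_jacobiSym_eq_neg_one (by omega) hk_nonsq
  refine ⟨r, Nat.isCoprime_iff_coprime.mpr hr_cop, fun s _ hs => ?_⟩
  obtain ⟨hJ, hJneg⟩ := hr s (Int.natCast_modEq_iff.mp hs)
  exact ⟨not_exists_sq_modEq_of_jacobiSym_eq_neg_one hJ,
    not_exists_sq_modEq_of_jacobiSym_eq_neg_one hJneg⟩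
end

section
/- Let P be a set of primes such that the sum of reciprocals ∑_{s∈P} 1/s diverges. Then the natural density of the set of positive integers n all of whose odd-exponent prime factors lie outside P is zero. That is, if S_N denotes the set of n ≤ N such that every prime s ∈ P divides n to an even power, then |S_N|/N → 0 as N → ∞. -/
/-!
If every prime of a finite set `F` divides `n` to an even power, then `s ∣ n → s² ∣ n` for all
`s ∈ F`, a condition depending only on `n` modulo `∏ s²`. By the Chinese remainder theorem it
holds for a proportion `∏ (1 - 1/s + 1/s²) ≤ exp (-½ ∑ 1/s)` of the residues, so the upper density
of the set is at most this product, which the divergence of `∑_{s ∈ P} 1/s` makes arbitrarily small.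
-/

open Finset Function

theorem card_filter_range_mul_of_coprime {a b : ℕ} (ha : a ≠ 0) (hb : b ≠ 0) (hab : a.Coprime b)
    {p q : ℕ → Prop} [DecidablePred p] [DecidablePred q] (hp : ∀ r, p (r % a) ↔ p r)
    (hq : ∀ r, q (r % b) ↔ q r) :
    #{r ∈ range (a * b) | p r ∧ q r} = #{r ∈ range a | p r} * #{r ∈ range b | q r} := by
  rw [← card_product, ← filter_product]
  let crt (x : ℕ × ℕ) : ℕ := Nat.chineseRemainder hab x.1 x.2
  have crt_mod_left {x : ℕ × ℕ} (hx : x.1 < a) : crt x % a = x.1 :=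
    Eq.trans (Nat.chineseRemainder hab x.1 x.2).2.1 (Nat.mod_eq_of_lt hx)
  have crt_mod_right {x : ℕ × ℕ} (hx : x.2 < b) : crt x % b = x.2 :=
    Eq.trans (Nat.chineseRemainder hab x.1 x.2).2.2 (Nat.mod_eq_of_lt hx)
  refine card_nbij' (fun r => (r % a, r % b)) crt ?_ ?_ ?_ ?_
  · intro r hr
    simp only [coe_filter, mem_range, Set.mem_ofPred_eq, mem_product, hp, hq] at hr ⊢
    exact ⟨⟨Nat.mod_lt _ (Nat.pos_of_ne_zero ha), Nat.mod_lt _ (Nat.pos_of_ne_zero hb)⟩, hr.2⟩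
  · intro x hx
    simp only [coe_filter, mem_range, Set.mem_ofPred_eq, mem_product] at hx ⊢
    rw [← hp, ← hq, crt_mod_left hx.1.1, crt_mod_right hx.1.2]
    exact ⟨Nat.chineseRemainder_lt_mul hab _ _ ha hb, hx.2⟩
  · intro r hr
    simp only [coe_filter, mem_range, Set.mem_ofPred_eq] at hr
    exact (Nat.chineseRemainder_modEq_unique hab (Nat.mod_modEq r a).symm
      (Nat.mod_modEq r b).symm).symm.eq_of_lt_of_lt
      (Nat.chineseRemainder_lt_mul hab _ _ ha hb) hr.1
  · intro x hx
    simp only [coe_filter, mem_range, Set.mem_ofPred_eq, mem_product] at hx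
    exact Prod.ext (crt_mod_left hx.1.1) (crt_mod_right hx.1.2)

theorem card_filter_range_prod_of_pairwise_coprime {ι : Type*} [DecidableEq ι] (F : Finset ι)
    {m : ι → ℕ} (hm : ∀ i ∈ F, m i ≠ 0) (hcop : (F : Set ι).Pairwise (Nat.Coprime on m))
    {p : ι → ℕ → Prop} [∀ i, DecidablePred (p i)] (hp : ∀ i ∈ F, ∀ r, p i (r % m i) ↔ p i r) :
    #{r ∈ range (∏ i ∈ F, m i) | ∀ i ∈ F, p i r} = ∏ i ∈ F, #{r ∈ range (m i) | p i r} := by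
  induction F using Finset.induction_on with
  | empty => simp
  | @insert a F haF ih =>
    rw [coe_insert, Set.pairwise_insert] at hcop
    have hmF : ∀ i ∈ F, m i ≠ 0 := fun i hi => hm i (mem_insert_of_mem hi)
    have hpF : ∀ i ∈ F, ∀ r, p i (r % m i) ↔ p i r := fun i hi => hp i (mem_insert_of_mem hi)
    have hcopF : (m a).Coprime (∏ i ∈ F, m i) :=
      Nat.Coprime.prod_right fun i hi => (hcop.2 i hi (ne_of_mem_of_not_mem hi haF).symm).1
    have hpF_mod_prod : ∀ r, (∀ i ∈ F, p i (r % ∏ j ∈ F, m j)) ↔ ∀ i ∈ F, p i r :=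
      fun r => forall₂_congr fun i hi => by
        rw [← hpF i hi, Nat.mod_mod_of_dvd r (dvd_prod_of_mem m hi), hpF i hi]
    simp only [prod_insert haF, forall_mem_insert]
    rw [card_filter_range_mul_of_coprime (hm a (mem_insert_self a F)) (prod_ne_zero_iff.2 hmF)
      hcopF (hp a (mem_insert_self a F)) hpF_mod_prod, ih hmF hcop.1 hpF]

theorem card_filter_range_sq_dvd_of_dvd {t : ℕ} (ht : 0 < t) :
    #{x ∈ range (t ^ 2) | t ∣ x → t ^ 2 ∣ x} = t ^ 2 - t + 1 := by
  have hgood : {x ∈ range (t ^ 2) | t ∣ x → t ^ 2 ∣ x} =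
      range (t ^ 2) \ (Ico 1 t).image (t * ·) := by
    ext x
    simp only [mem_filter, mem_sdiff, mem_range, mem_image, mem_Ico, not_exists, not_and]
    refine and_congr_right fun hx => ?_
    constructor
    · rintro h k ⟨hk, hkt⟩ rfl
      exact Nat.not_dvd_of_pos_of_lt hk hkt
        ((Nat.mul_dvd_mul_iff_left ht).1 (by simpa [sq] using h (dvd_mul_right t k)))
    · rintro h ⟨k, rfl⟩
      rw [sq]
      refine mul_dvd_mul_left t ?_
      by_contra hk
      exact h k ⟨Nat.pos_of_ne_zero (by rintro rfl; exact hk (dvd_zero t)),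
        (Nat.mul_lt_mul_left ht).1 (by rwa [sq] at hx)⟩ rfl
  rw [hgood, card_sdiff_of_subset, card_range,
    card_image_of_injective _ (mul_right_injective₀ ht.ne'), Nat.card_Ico]
  · have : t ≤ t ^ 2 := Nat.le_self_pow two_ne_zero t
    omega
  · intro x hx
    obtain ⟨k, hk, rfl⟩ := mem_image.1 hx
    rw [mem_range, sq]
    exact Nat.mul_lt_mul_of_pos_left (mem_Ico.1 hk).2 ht

theorem card_filter_range_prod_sq_dvd_of_dvd (F : Finset ℕ) (hF : ∀ s ∈ F, s.Prime) :
    #{r ∈ range (∏ s ∈ F, s ^ 2) | ∀ s ∈ F, s ∣ r → s ^ 2 ∣ r} = ∏ s ∈ F, (s ^ 2 - s + 1) := by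
  have hcop : (F : Set ℕ).Pairwise (Nat.Coprime on fun s => s ^ 2) := fun s hs t ht hst =>
    ((Nat.coprime_primes (hF s hs) (hF t ht)).2 hst).pow 2 2
  rw [card_filter_range_prod_of_pairwise_coprime F (fun s hs => pow_ne_zero 2 (hF s hs).ne_zero)
    hcop (p := fun s x => s ∣ x → s ^ 2 ∣ x) fun s _ r => by
      rw [Nat.dvd_mod_iff (dvd_pow_self s two_ne_zero), Nat.dvd_mod_iff dvd_rfl]]
  exact prod_congr rfl fun s hs => card_filter_range_sq_dvd_of_dvd (hF s hs).pos

theorem card_filter_Icc_le_of_mod_iff {M : ℕ} (hM : 0 < M) (N : ℕ) {p : ℕ → Prop} [DecidablePred p]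
    (hp : ∀ n, p (n % M) ↔ p n) :
    #{n ∈ Icc 1 N | p n} ≤ (N / M + 1) * #{r ∈ range M | p r} := by
  rw [← card_range (N / M + 1), ← card_product]
  refine card_le_card_of_injOn (fun n => (n / M, n % M)) (fun n hn => ?_) fun n₁ _ n₂ _ h => ?_
  · rw [mem_coe, mem_filter, mem_Icc] at hn
    rw [mem_coe, mem_product, mem_range, mem_filter, mem_range, hp]
    exact ⟨Nat.lt_succ_of_le (Nat.div_le_div_right hn.1.2), Nat.mod_lt _ hM, hn.2⟩
  · simp only [Prod.mk.injEq] at h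
    rw [← Nat.div_add_mod n₁ M, ← Nat.div_add_mod n₂ M, h.1, h.2]

theorem card_filter_Icc_sq_dvd_of_dvd_le (F : Finset ℕ) (hF : ∀ s ∈ F, s.Prime) (N : ℕ) :
    (#{n ∈ Icc 1 N | ∀ s ∈ F, s ∣ n → s ^ 2 ∣ n} : ℝ) ≤
      N * ∏ s ∈ F, ((s ^ 2 - s + 1 : ℕ) : ℝ) / (s : ℝ) ^ 2 + ∏ s ∈ F, (s ^ 2 - s + 1 : ℕ) := by
  set M := ∏ s ∈ F, s ^ 2
  set K := ∏ s ∈ F, (s ^ 2 - s + 1)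
  have hM : 0 < M := prod_pos fun s hs => pow_pos (hF s hs).pos 2
  have hcard : #{n ∈ Icc 1 N | ∀ s ∈ F, s ∣ n → s ^ 2 ∣ n} ≤ (N / M + 1) * K := by
    rw [show K = _ from (card_filter_range_prod_sq_dvd_of_dvd F hF).symm]
    refine card_filter_Icc_le_of_mod_iff hM N fun n => forall₂_congr fun s hs => ?_
    have hs2 : s ^ 2 ∣ M := dvd_prod_of_mem _ hs
    rw [Nat.dvd_mod_iff ((dvd_pow_self s two_ne_zero).trans hs2), Nat.dvd_mod_iff hs2]
  have hKM : (K : ℝ) / M = ∏ s ∈ F, ((s ^ 2 - s + 1 : ℕ) : ℝ) / (s : ℝ) ^ 2 := by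
    simp only [K, M, Nat.cast_prod, Nat.cast_pow, prod_div_distrib]
  rw [← hKM]
  calc (#{n ∈ Icc 1 N | ∀ s ∈ F, s ∣ n → s ^ 2 ∣ n} : ℝ)
      ≤ ((N / M : ℕ) + 1) * K := by exact_mod_cast hcard
    _ ≤ (N / M + 1) * K := by gcongr; exact Nat.cast_div_le
    _ = N * (K / M) + K := by field_simp

theorem sq_sub_add_one_div_sq_le_exp {s : ℕ} (hs : 2 ≤ s) :
    ((s ^ 2 - s + 1 : ℕ) : ℝ) / (s : ℝ) ^ 2 ≤ Real.exp (-(1 / (s : ℝ)) / 2) := by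
  have hs' : (2 : ℝ) ≤ s := by exact_mod_cast hs
  have hcast : ((s ^ 2 - s + 1 : ℕ) : ℝ) = (s : ℝ) ^ 2 - s + 1 := by
    push_cast [Nat.le_self_pow two_ne_zero s]; ring
  have hsq : 1 / (s : ℝ) ^ 2 ≤ 1 / s / 2 := by
    rw [div_div]; exact one_div_le_one_div_of_le (by positivity) (by nlinarith)
  calc ((s ^ 2 - s + 1 : ℕ) : ℝ) / (s : ℝ) ^ 2 = 1 - 1 / s + 1 / (s : ℝ) ^ 2 := by
        rw [hcast]; field_simp
    _ ≤ -(1 / (s : ℝ)) / 2 + 1 := by linarith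
    _ ≤ Real.exp (-(1 / (s : ℝ)) / 2) := Real.add_one_le_exp _

theorem prod_sq_sub_add_one_div_sq_le_exp (F : Finset ℕ) (hF : ∀ s ∈ F, 2 ≤ s) :
    ∏ s ∈ F, ((s ^ 2 - s + 1 : ℕ) : ℝ) / (s : ℝ) ^ 2 ≤ Real.exp (-(∑ s ∈ F, 1 / (s : ℝ)) / 2) := by
  calc ∏ s ∈ F, ((s ^ 2 - s + 1 : ℕ) : ℝ) / (s : ℝ) ^ 2
      ≤ ∏ s ∈ F, Real.exp (-(1 / (s : ℝ)) / 2) :=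
        prod_le_prod (fun s _ => by positivity) fun s hs => sq_sub_add_one_div_sq_le_exp (hF s hs)
    _ = Real.exp (-(∑ s ∈ F, 1 / (s : ℝ)) / 2) := by
        rw [← Real.exp_sum, ← sum_neg_distrib, sum_div]

theorem exists_finset_subset_lt_sum_of_not_summable {α : Type*} {P : Set α} {f : α → ℝ}
    (hf : ∀ a ∈ P, 0 ≤ f a) (hdiv : ¬ Summable fun a : P => f a) (C : ℝ) :
    ∃ F : Finset α, ↑F ⊆ P ∧ C < ∑ a ∈ F, f a := by
  by_contra! h
  refine hdiv (summable_of_sum_le (c := C) (fun a => hf a a.2) fun T => ?_)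
  have hT : ↑(T.map (Embedding.subtype _)) ⊆ P := fun a ha => by
    obtain ⟨b, -, rfl⟩ := mem_map.1 ha
    exact b.2
  simpa only [sum_map, Embedding.coe_subtype] using h _ hT

theorem exists_finset_subset_prod_sq_sub_add_one_div_sq_lt {P : Set ℕ} (hP : ∀ s ∈ P, s.Prime)
    (hdiv : ¬ Summable fun s : P => 1 / ((s : ℕ) : ℝ)) {ε : ℝ} (hε : 0 < ε) :
    ∃ F : Finset ℕ, ↑F ⊆ P ∧ ∏ s ∈ F, ((s ^ 2 - s + 1 : ℕ) : ℝ) / (s : ℝ) ^ 2 < ε := by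
  obtain ⟨F, hFP, hF⟩ := exists_finset_subset_lt_sum_of_not_summable
    (f := fun s : ℕ => 1 / (s : ℝ)) (fun s _ => by positivity) hdiv (-2 * Real.log ε)
  refine ⟨F, hFP, (prod_sq_sub_add_one_div_sq_le_exp F fun s hs =>
    (hP s (hFP hs)).two_le).trans_lt ?_⟩
  rw [← Real.exp_log hε, Real.exp_lt_exp]
  linarith

theorem Nat.Prime.sq_dvd_of_dvd_of_even_factorization {s n : ℕ} (hs : s.Prime)
    (he : Even (n.factorization s)) (hd : s ∣ n) : s ^ 2 ∣ n := by
  rcases eq_or_ne n 0 with rfl | hn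
  · exact dvd_zero _
  rw [hs.pow_dvd_iff_le_factorization hn]
  have := hs.factorization_pos_of_dvd hn hd
  obtain ⟨k, hk⟩ := he
  omega

open scoped Classical in
/-- If `P` is a set of primes whose sum of reciprocals diverges, then
the natural density of the set of positive integers all of whose odd-exponent prime
factors lie outside `P` (i.e. every prime of `P` divides them to an even power)
is zero. -/
theorem stmt2 (P : Set ℕ) (hP : ∀ s ∈ P, Nat.Prime s)
    (hdiv : ¬ Summable (fun s : P => (1 : ℝ) / ((s : ℕ) : ℝ))) :
    Filter.Tendsto
      (fun N : ℕ =>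
        (((Finset.Icc 1 N).filter
          (fun n => ∀ s ∈ P, Even (n.factorization s))).card : ℝ) / (N : ℝ))
      Filter.atTop (nhds 0) := by
  refine tendsto_order.2 ⟨fun a ha => .of_forall fun N => ha.trans_le (by positivity),
    fun ε hε => ?_⟩
  obtain ⟨F, hFP, hFε⟩ := exists_finset_subset_prod_sq_sub_add_one_div_sq_lt hP hdiv hε
  have hF : ∀ s ∈ F, s.Prime := fun s hs => hP s (hFP hs)
  set c := ∏ s ∈ F, ((s ^ 2 - s + 1 : ℕ) : ℝ) / (s : ℝ) ^ 2
  set K := ∏ s ∈ F, (s ^ 2 - s + 1)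
  have hlim : Filter.Tendsto (fun N : ℕ => c + K / N) Filter.atTop (nhds c) := by
    simpa using tendsto_const_nhds.add (tendsto_const_div_atTop_nhds_zero_nat (K : ℝ))
  filter_upwards [hlim.eventually_lt_const hFε, Filter.eventually_gt_atTop 0] with N hN hN0
  refine lt_of_le_of_lt ?_ hN
  rw [div_le_iff₀ (by positivity)]
  calc _ ≤ (#{n ∈ Icc 1 N | ∀ s ∈ F, s ∣ n → s ^ 2 ∣ n} : ℝ) := by
        refine Nat.cast_le.2 (card_le_card (monotone_filter_right _ fun n _ hn s hs => ?_))
        exact (hF s hs).sq_dvd_of_dvd_of_even_factorization (hn s (hFP hs))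
    _ ≤ N * c + K := card_filter_Icc_sq_dvd_of_dvd_le F hF N
    _ = (c + K / N) * N := by field_simp
end

section
/- Let p be an odd integer with p ≥ 3 and let k ≥ 0. Set q = (2k+1)p - 1 and d = (p-1)(q-1)/2 = (p-1)((2k+1)p-2)/2. Then for every integer i with 0 ≤ i ≤ (p-3)/2, the integer d + i is NOT in the numerical semigroup generated by p and q, i.e., there do not exist nonnegative integers a, b with ap + bq = d + i. Moreover, d + (p-1)/2 IS in the semigroup: ((p-1)/2)·q = d + (p-1)/2. -/
/-! Write `p = 2t + 1`. Since `q ≡ -1 (mod p)`, an element `a p + b q` of the semigroup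
`⟨p, q⟩` lies in the residue class `-b` mod `p`, so the least element of the class `-r`
(`0 ≤ r < p`) is `r q`. The class of `d + i` is `-(p - 1 - i)`, and `(p - 1 - i) q ≥ (t + 1) q`
exceeds `d + i = t (q - 1) + i` as soon as `i < t`. The last identity is `t q = t (q - 1) + t`. -/

lemma dvd_add_of_mul_add_mul_eq {p q a b n : ℤ} (hpq : p ∣ q + 1) (h : a * p + b * q = n) :
    p ∣ n + b := by
  rw [← h, show a * p + b * q + b = p * a + b * (q + 1) by ring]
  exact dvd_add (dvd_mul_right p a) (dvd_mul_of_dvd_right hpq b)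

lemma mul_le_of_mul_add_mul_eq {p q a b n r : ℤ} (hq : 0 ≤ q) (hpq : p ∣ q + 1)
    (hr : 0 ≤ r) (hrp : r < p) (hn : p ∣ n + r)
    (ha : 0 ≤ a) (hb : 0 ≤ b) (h : a * p + b * q = n) : r * q ≤ n := by
  have hbr : p ∣ b - r := by
    simpa using dvd_sub (dvd_add_of_mul_add_mul_eq hpq h) hn
  have hrb : r ≤ b := by
    -- `b - r > -p` is a multiple of `p`
    obtain ⟨c, hc⟩ := hbr
    have : 0 ≤ c := by nlinarith
    nlinarith
  nlinarith [mul_le_mul_of_nonneg_right hrb hq, mul_nonneg ha (hr.trans hrp.le)]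

theorem stmt5_general (p k q d : ℤ) (hpodd : Odd p) (hk : 0 ≤ k)
    (hq : q = (2 * k + 1) * p - 1) (hd : 2 * d = (p - 1) * (q - 1)) :
    (∀ i : ℤ, 0 ≤ i → i ≤ (p - 3) / 2 →
      ¬ ∃ a b : ℤ, 0 ≤ a ∧ 0 ≤ b ∧ a * p + b * q = d + i) ∧
    ((p - 1) / 2) * q = d + (p - 1) / 2 := by
  obtain ⟨t, rfl⟩ := hpodd
  have hdt : d = t * (q - 1) := by linarith
  have hhalf : (2 * t + 1 - 1) / 2 = t := by omega
  refine ⟨fun i hi0 hi ⟨a, b, ha, hb, hab⟩ => ?_, by rw [hhalf, hdt]; ring⟩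
  have hit : i < t := by omega
  have hq0 : 0 ≤ q := by nlinarith
  have hpq : 2 * t + 1 ∣ q + 1 := ⟨2 * k + 1, by rw [hq]; ring⟩
  have hn : 2 * t + 1 ∣ d + i + (2 * t - i) := by
    rw [show d + i + (2 * t - i) = t * (q + 1) by rw [hdt]; ring]
    exact dvd_mul_of_dvd_right hpq t
  have hle := mul_le_of_mul_add_mul_eq hq0 hpq (by omega) (by omega) hn ha hb hab
  nlinarith

/-- For odd `p ≥ 3`, `k ≥ 0`, `q = (2k+1)p - 1` and `2d = (p-1)(q-1)`:
for every `0 ≤ i ≤ (p-3)/2`, the integer `d + i` is not in the numerical semigroup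
generated by `p` and `q`, while `((p-1)/2)·q = d + (p-1)/2`. -/
theorem stmt5 (p k q d : ℤ) (hp : 3 ≤ p) (hpodd : Odd p) (hk : 0 ≤ k)
    (hq : q = (2 * k + 1) * p - 1) (hd : 2 * d = (p - 1) * (q - 1)) :
    (∀ i : ℤ, 0 ≤ i → i ≤ (p - 3) / 2 →
      ¬ ∃ a b : ℤ, 0 ≤ a ∧ 0 ≤ b ∧ a * p + b * q = d + i) ∧
    ((p - 1) / 2) * q = d + (p - 1) / 2 :=
  stmt5_general p k q d hpodd hk hq hd
end

section
/- Let p be an even integer with p ≥ 2 and let k ≥ 0. Set q = (2k+1)p + 1 and d = (p-1)(q-1)/2 = (p-1)(2k+1)p/2. Then for every integer i with 0 ≤ i ≤ (p-2)/2, the integer d + i is NOT in the numerical semigroup generated by p and q. Moreover, d + p/2 IS in the semigroup: ((p-1)(2k+1)+1)/2 · p = d + p/2. -/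
/-! Write `p = 2m`. Since `q ≡ 1 (mod p)`, any representation `a p + b q` of `n` has
`b ≡ n (mod p)`, so `b ≥ n % p` and `n ≥ (n % p) q`. For `n = d + i` one computes
`n % p = m + i`, while `(m + i) q > d + i`. -/

theorem Int.emod_le_self_of_nonneg {b p : ℤ} (hb : 0 ≤ b) (hp : 0 < p) : b % p ≤ b := by
  have := Int.emod_add_mul_ediv b p
  have := mul_nonneg hp.le (Int.ediv_nonneg hb hp.le)
  linarith

theorem emod_mul_le_of_modEq_one {p q a b : ℤ} (hp : 0 < p) (hq₀ : 0 ≤ q)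
    (hq : q ≡ 1 [ZMOD p]) (ha : 0 ≤ a) (hb : 0 ≤ b) :
    (a * p + b * q) % p * q ≤ a * p + b * q := by
  have hmod : a * p + b * q ≡ b [ZMOD p] := by
    simpa using (Int.modEq_zero_iff_dvd.2 (dvd_mul_left p a)).add (hq.mul_left b)
  calc (a * p + b * q) % p * q = b % p * q := by rw [hmod]
    _ ≤ b * q := mul_le_mul_of_nonneg_right (Int.emod_le_self_of_nonneg hb hp) hq₀
    _ ≤ a * p + b * q := le_add_of_nonneg_left (mul_nonneg ha hp.le)

theorem Int.odd_mul_add_emod_two_mul {r m i : ℤ} (hr : Odd r) (hi₀ : 0 ≤ i) (hi : i < m) :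
    (r * m + i) % (2 * m) = m + i := by
  obtain ⟨s, rfl⟩ := hr
  rw [show (2 * s + 1) * m + i = m + i + 2 * m * s by ring, Int.add_mul_emod_self_left,
    Int.emod_eq_of_lt] <;> omega

/-- For even `p ≥ 2`, `k ≥ 0`, `q = (2k+1)p + 1` and `2d = (p-1)(q-1)`:
for every `0 ≤ i ≤ (p-2)/2`, the integer `d + i` is not in the numerical semigroup
generated by `p` and `q`, while `(((p-1)(2k+1)+1)/2)·p = d + p/2`. -/
theorem stmt6 (p k q d : ℤ) (hp : 2 ≤ p) (hpe : Even p) (hk : 0 ≤ k)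
    (hq : q = (2 * k + 1) * p + 1) (hd : 2 * d = (p - 1) * (q - 1)) :
    (∀ i : ℤ, 0 ≤ i → i ≤ (p - 2) / 2 →
      ¬ ∃ a b : ℤ, 0 ≤ a ∧ 0 ≤ b ∧ a * p + b * q = d + i) ∧
    (((p - 1) * (2 * k + 1) + 1) / 2) * p = d + p / 2 := by
  obtain ⟨m, rfl⟩ := even_iff_two_dvd.mp hpe
  have hd' : d = (2 * m - 1) * (2 * k + 1) * m := by subst hq; linarith
  subst hd'
  constructor
  · rintro i hi₀ hi ⟨a, b, ha, hb, hrep⟩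
    have hq₁ : q ≡ 1 [ZMOD 2 * m] := by simp [hq, Int.modEq_iff_dvd]
    have hodd : Odd ((2 * m - 1) * (2 * k + 1)) := Odd.mul ⟨m - 1, by ring⟩ ⟨k, rfl⟩
    have hle := emod_mul_le_of_modEq_one (by omega) (by rw [hq]; positivity) hq₁ ha hb
    rw [hrep, Int.odd_mul_add_emod_two_mul hodd hi₀ (by omega), hq] at hle
    have hm : 0 < m := by omega
    nlinarith [mul_nonneg hm.le hk, mul_nonneg (mul_nonneg hi₀ hm.le) hk, mul_nonneg hi₀ hm.le]
  · have : (2 * m - 1) * (2 * k + 1) + 1 = 2 * (2 * m * k + m - k) := by ring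
    rw [this, Int.mul_ediv_cancel_left _ two_ne_zero, Int.mul_ediv_cancel_left _ two_ne_zero]
    ring
end

section
/- Let C and D be chain complexes over a commutative ring, let g : C → D be a chain homotopy equivalence, and let f : C → C be any chain map. Then the mapping cone of f and the mapping cone of g ∘ f are chain homotopy equivalent. -/
/-!
In the homotopy category the mapping cone of `φ` is the third vertex of a distinguished
triangle on `φ`, and in a pretriangulated category such a vertex is determined up to
isomorphism by the arrow `φ`. Since `g` becomes an isomorphism in the homotopy category,
the arrows `f` and `f ≫ g` are isomorphic there (via the identity on the source and `g` on
the target), so their cones are isomorphic in the homotopy category, i.e. homotopy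
equivalent.
-/

open CategoryTheory Limits Pretriangulated

namespace CochainComplex

variable {V : Type*} [Category V] [Preadditive V] [HasBinaryBiproducts V] [HasZeroObject V]

theorem nonempty_homotopyEquiv_mappingCone_of_arrow_iso {K L K' L' : CochainComplex V ℤ}
    (φ : K ⟶ L) (φ' : K' ⟶ L')
    (e : Arrow.mk ((HomotopyCategory.quotient V _).map φ) ≅
      Arrow.mk ((HomotopyCategory.quotient V _).map φ')) :
    Nonempty (HomotopyEquiv (mappingCone φ) (mappingCone φ')) := by
  obtain ⟨iso, -⟩ := exists_iso_of_arrow_iso _ _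
    (HomotopyCategory.mappingCone_triangleh_distinguished φ)
    (HomotopyCategory.mappingCone_triangleh_distinguished φ') e
  exact ⟨HomotopyCategory.homotopyEquivOfIso (Triangle.π₃.mapIso iso)⟩

theorem nonempty_homotopyEquiv_mappingCone_comp {K L M : CochainComplex V ℤ}
    (φ : K ⟶ L) (e : HomotopyEquiv L M) :
    Nonempty (HomotopyEquiv (mappingCone φ) (mappingCone (φ ≫ e.hom))) :=
  nonempty_homotopyEquiv_mappingCone_of_arrow_iso _ _ <|
    Arrow.isoMk (Iso.refl _) (HomotopyCategory.isoOfHomotopyEquiv e) <| by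
      simp [HomotopyCategory.isoOfHomotopyEquiv]

end CochainComplex

open CategoryTheory in
/-- If `g : C ⟶ D` is a chain homotopy equivalence of complexes of
modules over a ring and `f : C ⟶ C` is any chain map, then the mapping cones of `f`
and of `g ∘ f` are chain homotopy equivalent. -/
theorem stmt11 (R : Type*) [Ring R]
    (C D : CochainComplex (ModuleCat R) ℤ) (f : C ⟶ C) (g : C ⟶ D)
    (hg : ∃ e : HomotopyEquiv C D, e.hom = g) :
    Nonempty (HomotopyEquiv (CochainComplex.mappingCone f)
      (CochainComplex.mappingCone (f ≫ g))) := by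
  obtain ⟨e, rfl⟩ := hg
  exact CochainComplex.nonempty_homotopyEquiv_mappingCone_comp f e
end

section
/- Let K be a knot whose double branched cover has H₁ ≅ ℤ/nℤ with linking form λ(x,x) = (m/n)x² mod 1 for some integer m with gcd(m,n)=1. Suppose the linking form splits as (ℤ/kℤ, λ₁) ⊕ (ℤ/ℓℤ, λ₂) where n = kℓ, λ₁ is represented by (±1/k), and ℓ is a perfect square. If s is a prime dividing n to an odd power such that neither m nor -m is a quadratic residue mod s, then no such splitting exists (contradiction). Formally: if n = kℓ with ℓ a perfect square and there exists an integer r coprime to k with m·ℓ·r² ≡ ±1 (mod k), then for every prime s dividing n to an odd power, m or -m is a quadratic residue mod s. -/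
/-! Since `ℓ` is a square, every prime dividing `n = kℓ` to an odd power divides `k`.
Multiplying `m ℓ r² ≡ ±1 (mod k)` by `m` and writing `ℓ = ℓ₀²` gives `(m ℓ₀ r)² ≡ ±m (mod k)`,
hence modulo `s`. -/

theorem Nat.dvd_of_odd_factorization_mul_sq {k l s : ℕ} (h : Odd ((k * l ^ 2).factorization s)) :
    s ∣ k := by
  by_contra hsk
  have hk : k ≠ 0 := by rintro rfl; exact hsk (dvd_zero s)
  have hl : l ≠ 0 := by rintro rfl; simp at h
  rw [Nat.factorization_mul hk (pow_ne_zero 2 hl), Nat.factorization_pow, Finsupp.add_apply,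
    Nat.factorization_eq_zero_of_not_dvd hsk, zero_add, Finsupp.smul_apply, smul_eq_mul] at h
  exact Nat.not_odd_iff_even.mpr (even_two_mul _) h

theorem Int.ModEq.sq_mul_of_mul_sq {m a u d : ℤ} (h : m * a ^ 2 ≡ u [ZMOD d]) :
    (m * a) ^ 2 ≡ m * u [ZMOD d] :=
  calc (m * a) ^ 2 = m * (m * a ^ 2) := by ring
    _ ≡ m * u [ZMOD d] := h.mul_left m

theorem stmt14_general (n k ℓ : ℕ) (m : ℤ)
    (hnkl : n = k * ℓ) (hsq : ∃ l₀ : ℕ, ℓ = l₀ ^ 2)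
    (hr : ∃ r : ℤ, IsCoprime r (k : ℤ) ∧
      (m * (ℓ : ℤ) * r ^ 2 ≡ 1 [ZMOD (k : ℤ)] ∨
       m * (ℓ : ℤ) * r ^ 2 ≡ -1 [ZMOD (k : ℤ)])) :
    ∀ s : ℕ, s.Prime → Odd (n.factorization s) →
      (∃ x : ℤ, x ^ 2 ≡ m [ZMOD (s : ℤ)]) ∨
      (∃ x : ℤ, x ^ 2 ≡ -m [ZMOD (s : ℤ)]) := by
  intro s _ hodd
  obtain ⟨l₀, rfl⟩ := hsq
  obtain ⟨r, -, hr⟩ := hr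
  subst hnkl
  have hsk : (s : ℤ) ∣ k := Int.natCast_dvd_natCast.mpr (Nat.dvd_of_odd_factorization_mul_sq hodd)
  have hsquare : m * ((l₀ ^ 2 : ℕ) : ℤ) * r ^ 2 = m * (l₀ * r) ^ 2 := by push_cast; ring
  rw [hsquare] at hr
  rcases hr with h | h
  · exact .inl ⟨m * (l₀ * r), by simpa using (h.of_dvd hsk).sq_mul_of_mul_sq⟩
  · exact .inr ⟨m * (l₀ * r), by simpa using (h.of_dvd hsk).sq_mul_of_mul_sq⟩

/-- Let `n = k·ℓ` with `ℓ` a perfect square and `gcd(m,n) = 1`.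
If there exists `r` coprime to `k` with `m·ℓ·r² ≡ ±1 (mod k)`, then for every prime
`s` dividing `n` to an odd power, `m` or `-m` is a quadratic residue mod `s`. -/
theorem stmt14 (n k ℓ : ℕ) (m : ℤ) (hn : 0 < n) (hk : 0 < k) (hl : 0 < ℓ)
    (hnkl : n = k * ℓ) (hsq : ∃ l₀ : ℕ, ℓ = l₀ ^ 2)
    (hm : IsCoprime m (n : ℤ))
    (hr : ∃ r : ℤ, IsCoprime r (k : ℤ) ∧
      (m * (ℓ : ℤ) * r ^ 2 ≡ 1 [ZMOD (k : ℤ)] ∨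
       m * (ℓ : ℤ) * r ^ 2 ≡ -1 [ZMOD (k : ℤ)])) :
    ∀ s : ℕ, s.Prime → Odd (n.factorization s) →
      (∃ x : ℤ, x ^ 2 ≡ m [ZMOD (s : ℤ)]) ∨
      (∃ x : ℤ, x ^ 2 ≡ -m [ZMOD (s : ℤ)]) :=
  stmt14_general n k ℓ m hnkl hsq hr
end

section
/- For a set P of primes not dividing a fixed positive integer p, the density (within integers coprime to p) of integers all of whose P-prime factors occur to even powers equals the infinite product ∏_{s∈P} s/(s+1) (interpreted as the limit of partial products), and if ∑_{s∈P} 1/s = ∞ then ∏_{s∈P} s/(s+1) = 0. In particular, prove: for every prime s ≥ 2, log(s+1) - log(s) ≥ 1/(s+1), and hence ∑_{s∈P} 1/s = ∞ implies ∑_{s∈P}(log(s+1) - log(s)) = ∞, so ∏_{s∈P} s/(s+1) = 0. -/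
/-! Since `s / (s + 1) = exp (-(log (s + 1) - log s)) ≤ exp (-1 / (s + 1))`, each partial
product is at most `exp` of minus a partial sum of `1 / (s + 1)` over `P`. For `s ≥ 1` we have
`1 / s ≤ 2 / (s + 1)`, so these partial sums diverge with `∑ 1 / s`, forcing the products to `0`. -/

open Filter Finset Real Topology

lemma one_div_add_one_le_log_add_one_sub_log {x : ℝ} (hx : 0 < x) :
    1 / (x + 1) ≤ log (x + 1) - log x := by
  have h := one_sub_inv_le_log_of_pos (show 0 < (x + 1) / x by positivity)
  rw [log_div (by positivity) hx.ne', inv_div] at h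
  calc 1 / (x + 1) = 1 - x / (x + 1) := by field_simp; ring
    _ ≤ _ := h

lemma div_add_one_le_exp_neg_one_div_add_one {x : ℝ} (hx : 0 < x) :
    x / (x + 1) ≤ exp (-(1 / (x + 1))) := by
  have hx1 : 0 < x + 1 := by linarith
  calc x / (x + 1) = exp (-(log (x + 1) - log x)) := by
        rw [neg_sub, exp_sub, exp_log hx, exp_log hx1]
    _ ≤ _ := exp_le_exp.2 (neg_le_neg (one_div_add_one_le_log_add_one_sub_log hx))

section PartialProducts

variable (P : Set ℕ) [DecidablePred (· ∈ P)]

lemma tendsto_sum_range_filter_atTop {f : ℕ → ℝ} (hf : ∀ s ∈ P, 0 ≤ f s)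
    (h : ¬ Summable fun s : P => f s) :
    Tendsto (fun N => ∑ s ∈ (range N).filter (· ∈ P), f s) atTop atTop := by
  have hind : ∀ n, 0 ≤ P.indicator f n := Set.indicator_nonneg hf
  have hsum := (not_summable_iff_tendsto_nat_atTop_of_nonneg hind).1
    (summable_subtype_iff_indicator.not.1 h)
  refine hsum.congr fun N => ?_
  rw [sum_filter]
  exact sum_congr rfl fun s _ => by simp [Set.indicator_apply]

lemma tendsto_prod_range_filter_div_add_one_zero {x : ℕ → ℝ} (hx : ∀ s ∈ P, 0 < x s)
    (h : ¬ Summable fun s : P => 1 / (x s + 1)) :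
    Tendsto (fun N => ∏ s ∈ (range N).filter (· ∈ P), x s / (x s + 1)) atTop (𝓝 0) := by
  have hsum := tendsto_sum_range_filter_atTop P (f := fun s => 1 / (x s + 1))
    (fun s hs => by have := hx s hs; positivity) h
  have hexp : Tendsto (fun N => exp (-∑ s ∈ (range N).filter (· ∈ P), 1 / (x s + 1)))
      atTop (𝓝 0) :=
    tendsto_exp_atBot.comp (tendsto_neg_atBot_iff.2 hsum)
  refine tendsto_of_tendsto_of_tendsto_of_le_of_le tendsto_const_nhds hexp (fun N => ?_)
    (fun N => ?_)
  · refine prod_nonneg fun s hs => ?_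
    have := hx s (mem_filter.1 hs).2
    positivity
  · rw [← sum_neg_distrib, exp_sum]
    refine prod_le_prod (fun s hs => ?_) fun s hs => ?_
    · have := hx s (mem_filter.1 hs).2
      positivity
    · exact div_add_one_le_exp_neg_one_div_add_one (hx s (mem_filter.1 hs).2)

end PartialProducts

lemma not_summable_one_div_add_one {P : Set ℕ} (hP : ∀ s ∈ P, 1 ≤ s)
    (h : ¬ Summable fun s : P => (1 : ℝ) / (s : ℕ)) :
    ¬ Summable fun s : P => (1 : ℝ) / ((s : ℕ) + 1) := by
  refine fun hsum => h (.of_nonneg_of_le (fun _ => by positivity) (fun s => ?_) (hsum.mul_left 2))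
  have hs : (1 : ℝ) ≤ (s : ℕ) := by exact_mod_cast hP s s.2
  rw [mul_one_div, div_le_div_iff₀ (by linarith) (by linarith)]
  linarith

open scoped Classical in
theorem stmt17_general (p : ℕ) (P : Set ℕ)
    (hP : ∀ s ∈ P, Nat.Prime s ∧ ¬ s ∣ p) :
    (∀ s : ℕ, s.Prime → Real.log ((s : ℝ) + 1) - Real.log (s : ℝ) ≥ 1 / ((s : ℝ) + 1)) ∧
    ((¬ Summable (fun s : P => (1 : ℝ) / ((s : ℕ) : ℝ))) →
      Filter.Tendsto
        (fun N : ℕ => ∏ s ∈ (Finset.range N).filter (· ∈ P), (s : ℝ) / ((s : ℝ) + 1))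
        Filter.atTop (nhds 0)) := by
  refine ⟨fun s hs => one_div_add_one_le_log_add_one_sub_log (by exact_mod_cast hs.pos),
    fun h => ?_⟩
  have hpos : ∀ s ∈ P, 1 ≤ s := fun s hs => (hP s hs).1.one_lt.le
  exact tendsto_prod_range_filter_div_add_one_zero P (fun s hs => by exact_mod_cast hpos s hs)
    (not_summable_one_div_add_one hpos h)

open scoped Classical in
/-- For a set `P` of primes not dividing a fixed positive integer
`p`: for every prime `s`, `log(s+1) - log(s) ≥ 1/(s+1)`; and if `∑_{s∈P} 1/s`
diverges then the infinite product `∏_{s∈P} s/(s+1)` equals `0` (as the limit of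
partial products). -/
theorem stmt17 (p : ℕ) (hp : 0 < p) (P : Set ℕ)
    (hP : ∀ s ∈ P, Nat.Prime s ∧ ¬ s ∣ p) :
    (∀ s : ℕ, s.Prime → Real.log ((s : ℝ) + 1) - Real.log (s : ℝ) ≥ 1 / ((s : ℝ) + 1)) ∧
    ((¬ Summable (fun s : P => (1 : ℝ) / ((s : ℕ) : ℝ))) →
      Filter.Tendsto
        (fun N : ℕ => ∏ s ∈ (Finset.range N).filter (· ∈ P), (s : ℝ) / ((s : ℝ) + 1))
        Filter.atTop (nhds 0)) :=
  stmt17_general p P hP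
end
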